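/- arXiv:math/9805043 — 5 statements merged into one kernel-verified Lean document; each statement's English description precedes it below -/
import Mathlib

section
/- Define φ : ℂ³ → ℂ⁵ by φ(x,y,z) = (x², 2xy, 2xz + y², 2yz, z²). For all (x,y,z) and (x',y',z') in ℂ³, φ(x,y,z) = φ(x',y',z') if and only if (x',y',z') = (x,y,z) or (x',y',z') = (−x,−y,−z). -/
/-!
Read `(x, y, z)` as the polynomial `p = x + y T + z T²`: then `(x², 2xy, 2xz + y², 2yz, z²)` is
the coefficient vector of `p²`. Since polynomials are determined by their coefficients and
`R[T]` has no zero divisors, `p² = q²` forces `(p - q)(p + q) = 0`, i.e. `q = p` or `q = -p`.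
-/

open Polynomial

namespace SquareCoeffs

variable {R : Type*} [CommRing R]

noncomputable def quadratic (v : R × R × R) : R[X] :=
  C v.1 + C v.2.1 * X + C v.2.2 * X ^ 2

noncomputable def quartic (w : R × R × R × R × R) : R[X] :=
  C w.1 + C w.2.1 * X + C w.2.2.1 * X ^ 2 + C w.2.2.2.1 * X ^ 3 + C w.2.2.2.2 * X ^ 4

def squareCoeffs (v : R × R × R) : R × R × R × R × R :=
  (v.1 ^ 2, 2 * v.1 * v.2.1, 2 * v.1 * v.2.2 + v.2.1 ^ 2, 2 * v.2.1 * v.2.2, v.2.2 ^ 2)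

theorem quadratic_injective : Function.Injective (quadratic (R := R)) := by
  rintro ⟨a, b, c⟩ ⟨a', b', c'⟩ h
  have hcoeff (n : ℕ) := congrArg (coeff · n) h
  simp only [quadratic, coeff_add, coeff_C_mul_X, coeff_C_mul_X_pow, coeff_C] at hcoeff
  simp only [Prod.mk.injEq]
  exact ⟨by simpa using hcoeff 0, by simpa using hcoeff 1, by simpa using hcoeff 2⟩

theorem quartic_injective : Function.Injective (quartic (R := R)) := by
  rintro ⟨a, b, c, d, e⟩ ⟨a', b', c', d', e'⟩ h
  have hcoeff (n : ℕ) := congrArg (coeff · n) h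
  simp only [quartic, coeff_add, coeff_C_mul_X, coeff_C_mul_X_pow, coeff_C] at hcoeff
  simp only [Prod.mk.injEq]
  exact ⟨by simpa using hcoeff 0, by simpa using hcoeff 1, by simpa using hcoeff 2,
    by simpa using hcoeff 3, by simpa using hcoeff 4⟩

theorem quadratic_neg (v : R × R × R) : quadratic (-v) = -quadratic v := by
  simp only [quadratic, Prod.fst_neg, Prod.snd_neg, map_neg]
  ring

theorem quartic_squareCoeffs (v : R × R × R) : quartic (squareCoeffs v) = quadratic v ^ 2 := by
  simp only [quartic, squareCoeffs, quadratic, map_add, map_mul, map_pow, map_ofNat]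
  ring

theorem squareCoeffs_eq_iff [NoZeroDivisors R] (v w : R × R × R) :
    squareCoeffs v = squareCoeffs w ↔ w = v ∨ w = -v := by
  rw [← quartic_injective.eq_iff, quartic_squareCoeffs, quartic_squareCoeffs, eq_comm,
    sq_eq_sq_iff_eq_or_eq_neg, ← quadratic_neg, quadratic_injective.eq_iff,
    quadratic_injective.eq_iff]

end SquareCoeffs

open SquareCoeffs in
theorem stmt_7
    (φ : ℂ × ℂ × ℂ → ℂ × ℂ × ℂ × ℂ × ℂ)
    (hφ : ∀ x y z : ℂ, φ (x, y, z) = (x ^ 2, 2 * x * y, 2 * x * z + y ^ 2, 2 * y * z, z ^ 2))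
    (x y z x' y' z' : ℂ) :
    φ (x, y, z) = φ (x', y', z') ↔
      ((x', y', z') = (x, y, z) ∨ (x', y', z') = (-x, -y, -z)) := by
  have hφ' : φ = squareCoeffs := funext fun ⟨x, y, z⟩ ↦ hφ x y z
  rw [hφ', squareCoeffs_eq_iff]
  rfl
end

section
/- Define ψ : ℂ³ → ℂ⁶ by ψ(x,y,z) = (x², 2xy, 2xz + y², 2yz, z², 4xz − y²). Then the image of ψ equals the set of all (a,b,c,d,e,δ) ∈ ℂ⁶ satisfying the six equations 3d² − 8ce + 4δe = 0, cd − 6be + δd = 0, 3bd − 48ae + 2δc + 2δ² = 0, c² − 36ae + 2δc + δ² = 0, bc − 6ad + δb = 0, and 3b² − 8ac + 4δa = 0. -/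
theorem stmt_8
    (ψ : ℂ × ℂ × ℂ → ℂ × ℂ × ℂ × ℂ × ℂ × ℂ)
    (hψ : ∀ x y z : ℂ,
      ψ (x, y, z) = (x ^ 2, 2 * x * y, 2 * x * z + y ^ 2, 2 * y * z, z ^ 2, 4 * x * z - y ^ 2)) :
    Set.range ψ =
      {p : ℂ × ℂ × ℂ × ℂ × ℂ × ℂ |
        let (a, b, c, d, e, δ) := p
        3 * d ^ 2 - 8 * c * e + 4 * δ * e = 0 ∧
        c * d - 6 * b * e + δ * d = 0 ∧
        3 * b * d - 48 * a * e + 2 * δ * c + 2 * δ ^ 2 = 0 ∧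
        c ^ 2 - 36 * a * e + 2 * δ * c + δ ^ 2 = 0 ∧
        b * c - 6 * a * d + δ * b = 0 ∧
        3 * b ^ 2 - 8 * a * c + 4 * δ * a = 0} := by
  ext ⟨a, b, c, d, e, δ⟩
  simp only [Set.mem_range, Set.mem_setOf_eq]
  constructor
  · rintro ⟨⟨x, y, z⟩, h⟩
    rw [hψ] at h
    simp only [Prod.mk.injEq] at h
    obtain ⟨rfl, rfl, rfl, rfl, rfl, rfl⟩ := h
    refine ⟨by ring, by ring, by ring, by ring, by ring, by ring⟩
  · rintro ⟨h1, h2, h3, h4, h5, h6⟩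
    by_cases ha : a = 0
    · subst ha
      have hb : b = 0 := by
        have : b ^ 2 = 0 := by linear_combination h6 / 3
        exact pow_eq_zero_iff (n := 2) (by norm_num) |>.mp this
      subst hb
      have hc : c = -δ := by
        have h : (c + δ) ^ 2 = 0 := by linear_combination h4
        have := pow_eq_zero_iff (n := 2) (by norm_num) |>.mp h
        linear_combination this
      subst hc
      have hde : d ^ 2 = 4 * (-δ) * e := by linear_combination h1 / 3
      by_cases hd : δ = 0
      · subst hd
        have hd0 : d = 0 := by
          have : d ^ 2 = 0 := by linear_combination hde
          exact pow_eq_zero_iff (n := 2) (by norm_num) |>.mp this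
        subst hd0
        obtain ⟨z, hz⟩ := IsAlgClosed.exists_pow_nat_eq (k := ℂ) e zero_lt_two
        refine ⟨(0, 0, z), ?_⟩
        rw [hψ]
        simp only [Prod.mk.injEq]
        refine ⟨by norm_num, by norm_num, by norm_num, by norm_num, hz, by norm_num⟩
      · obtain ⟨y, hy⟩ := IsAlgClosed.exists_pow_nat_eq (k := ℂ) (-δ) zero_lt_two
        have hy0 : y ≠ 0 := fun h => hd (by linear_combination hy - y * h)
        refine ⟨(0, y, d / (2 * y)), ?_⟩
        rw [hψ]
        simp only [Prod.mk.injEq]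
        refine ⟨by norm_num, by norm_num, by linear_combination hy, by field_simp, ?_,
          by linear_combination -hy⟩
        field_simp
        linear_combination hde - 4 * e * hy
    · obtain ⟨x, hx⟩ := IsAlgClosed.exists_pow_nat_eq (k := ℂ) a zero_lt_two
      have hx0 : x ≠ 0 := by
        intro h; apply ha; rw [← hx, h]; ring
      subst hx
      refine ⟨(x, b / (2 * x), (c + δ) / (6 * x)), ?_⟩
      rw [hψ]
      simp only [Prod.mk.injEq]
      refine ⟨by norm_num, ?_, ?_, ?_, ?_, ?_⟩
      · field_simp
      · field_simp
        linear_combination 2 * h6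
      · field_simp
        linear_combination h5
      · field_simp
        linear_combination h4
      · field_simp
        linear_combination -2 * h6
end

section
/- Let n ≥ 1 be a natural number, let a, b be integers, and suppose g is an invertible 3×3 integer matrix (g ∈ GL(3,ℤ)) such that g fixes the first standard basis vector e₁ and the third standard basis vector e₃ of ℤ³, and g maps the vector (−(n−1), n, −1) to (a, b, −1). Then a ≡ 1 (mod n), and b = n or b = −n. -/
namespace Matrix

variable {R : Type*} [CommRing R] {M : Matrix (Fin 3) (Fin 3) R}

theorem eq_of_mulVec_e₁_eq_of_mulVec_e₃_eq (h1 : M *ᵥ ![1, 0, 0] = ![1, 0, 0])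
    (h3 : M *ᵥ ![0, 0, 1] = ![0, 0, 1]) :
    M = !![1, M 0 1, 0; 0, M 1 1, 0; 0, M 2 1, 1] := by
  ext i j
  have c1 := congrFun h1 i
  have c3 := congrFun h3 i
  simp only [mulVec, dotProduct, Fin.sum_univ_three] at c1 c3
  fin_cases i <;> fin_cases j <;> simp_all

theorem det_eq_of_mulVec_e₁_eq_of_mulVec_e₃_eq (h1 : M *ᵥ ![1, 0, 0] = ![1, 0, 0])
    (h3 : M *ᵥ ![0, 0, 1] = ![0, 0, 1]) : M.det = M 1 1 := by
  rw [eq_of_mulVec_e₁_eq_of_mulVec_e₃_eq h1 h3, det_fin_three]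
  simp

theorem mulVec_eq_of_mulVec_e₁_eq_of_mulVec_e₃_eq (h1 : M *ᵥ ![1, 0, 0] = ![1, 0, 0])
    (h3 : M *ᵥ ![0, 0, 1] = ![0, 0, 1]) (x y z : R) :
    M *ᵥ ![x, y, z] = ![x + M 0 1 * y, M 1 1 * y, z + M 2 1 * y] := by
  rw [eq_of_mulVec_e₁_eq_of_mulVec_e₃_eq h1 h3]
  ext i
  fin_cases i <;> simp [mulVec, dotProduct, Fin.sum_univ_three, add_comm]

end Matrix

theorem stmt_9_general (n : ℕ) (a b : ℤ)
    (g : Matrix.GeneralLinearGroup (Fin 3) ℤ)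
    (h1 : (g : Matrix (Fin 3) (Fin 3) ℤ).mulVec ![1, 0, 0] = ![1, 0, 0])
    (h3 : (g : Matrix (Fin 3) (Fin 3) ℤ).mulVec ![0, 0, 1] = ![0, 0, 1])
    (hv : (g : Matrix (Fin 3) (Fin 3) ℤ).mulVec ![-((n : ℤ) - 1), (n : ℤ), -1] = ![a, b, -1]) :
    a ≡ 1 [ZMOD (n : ℤ)] ∧ (b = (n : ℤ) ∨ b = -(n : ℤ)) := by
  set M : Matrix (Fin 3) (Fin 3) ℤ := (g : Matrix (Fin 3) (Fin 3) ℤ)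
  rw [Matrix.mulVec_eq_of_mulVec_e₁_eq_of_mulVec_e₃_eq h1 h3] at hv
  have ha : a = -((n : ℤ) - 1) + M 0 1 * n := (congrFun hv 0).symm
  have hb : b = M 1 1 * n := by simpa using (congrFun hv 1).symm
  have hunit : IsUnit (M 1 1) := by
    rw [← Matrix.det_eq_of_mulVec_e₁_eq_of_mulVec_e₃_eq h1 h3]
    exact g.isUnit.map Matrix.detMonoidHom
  refine ⟨Int.modEq_iff_dvd.mpr ⟨1 - M 0 1, by rw [ha]; ring⟩, ?_⟩
  rcases Int.isUnit_iff.mp hunit with h | h <;> simp [hb, h]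

theorem stmt_9 (n : ℕ) (hn : 1 ≤ n) (a b : ℤ)
    (g : Matrix.GeneralLinearGroup (Fin 3) ℤ)
    (h1 : (g : Matrix (Fin 3) (Fin 3) ℤ).mulVec ![1, 0, 0] = ![1, 0, 0])
    (h3 : (g : Matrix (Fin 3) (Fin 3) ℤ).mulVec ![0, 0, 1] = ![0, 0, 1])
    (hv : (g : Matrix (Fin 3) (Fin 3) ℤ).mulVec ![-((n : ℤ) - 1), (n : ℤ), -1] = ![a, b, -1]) :
    a ≡ 1 [ZMOD (n : ℤ)] ∧ (b = (n : ℤ) ∨ b = -(n : ℤ)) :=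
  stmt_9_general n a b g h1 h3 hv
end

section
/- Let Q be the set of 2×2 complex matrices M with trace 0 and determinant 1, and let f : Q → Q be any map satisfying f(A M A⁻¹) = A f(M) A⁻¹ for all A ∈ SL(2,ℂ) and all M ∈ Q. Then f is the identity map or f is the map M ↦ −M. -/
open Matrix Complex

noncomputable def Mz : Matrix (Fin 2) (Fin 2) ℂ := !![I, 0; 0, -I]

lemma Mz_trace : Mz.trace = 0 := by simp [Mz, Matrix.trace_fin_two_of]
lemma Mz_det : Mz.det = 1 := by simp [Mz, Matrix.det_fin_two_of, Complex.I_mul_I]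

lemma conj_to_Mz (M : Matrix (Fin 2) (Fin 2) ℂ) (ht : M.trace = 0) (hd : M.det = 1) :
    ∃ A : Matrix.SpecialLinearGroup (Fin 2) ℂ,
      M = (A : Matrix (Fin 2) (Fin 2) ℂ) * Mz *
          ((A⁻¹ : Matrix.SpecialLinearGroup (Fin 2) ℂ) : Matrix (Fin 2) (Fin 2) ℂ) := by
  set a := M 0 0 with ha
  set b := M 0 1 with hb
  set c := M 1 0 with hc
  have h11 : M 1 1 = -a := by
    have := Matrix.trace_fin_two M; rw [ht] at this; linear_combination -this
  have hbc : b * c = -1 - a ^ 2 := by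
    have := Matrix.det_fin_two M; rw [hd, h11] at this; linear_combination this
  have hM : M = !![a, b; c, -a] := by
    ext i j; fin_cases i <;> fin_cases j <;> simp [ha, hb, hc, h11]
  have hI : (I : ℂ) ^ 2 = -1 := Complex.I_sq
  by_cases hb0 : b ≠ 0
  · have hs : (-2 * I * b) ≠ 0 := by
      simp [Complex.I_ne_zero, hb0]
    refine ⟨⟨!![b / (-2 * I * b), b; (I - a) / (-2 * I * b), -I - a], ?_⟩, ?_⟩
    · rw [Matrix.det_fin_two_of]; field_simp; ring
    · erw [Matrix.SpecialLinearGroup.coe_inv]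
      simp only [Matrix.SpecialLinearGroup.coe_mk, Matrix.adjugate_fin_two_of]
      rw [hM]
      ext i j
      fin_cases i <;> fin_cases j <;>
        simp [Mz, Matrix.mul_apply, Fin.sum_univ_two] <;>
        field_simp <;>
        first
          | ring1
          | linear_combination (-2*I)*hbc + (2*I)*hI
          | (clear_value a b c; linear_combination (-2*I)*hbc + (2*I)*hI)
          | (clear_value a b c; linear_combination 2*hbc - 2*hI)
  · push_neg at hb0
    have ha2 : a ^ 2 = -1 := by rw [hb0] at hbc; linear_combination hbc
    have : (a - I) * (a + I) = 0 := by linear_combination ha2 - hI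
    rcases mul_eq_zero.mp this with h | h
    · have haI : a = I := by linear_combination h
      refine ⟨⟨!![1, 0; c / (2 * I), 1], ?_⟩, ?_⟩
      · rw [Matrix.det_fin_two_of]; ring
      · erw [Matrix.SpecialLinearGroup.coe_inv]
        simp only [Matrix.SpecialLinearGroup.coe_mk, Matrix.adjugate_fin_two_of]
        rw [hM, haI, hb0]
        ext i j
        fin_cases i <;> fin_cases j <;>
          simp [Mz, Matrix.mul_apply, Fin.sum_univ_two] <;>
          field_simp <;> ring_nf
    · have haI : a = -I := by linear_combination h
      refine ⟨⟨!![0, -1; 1, c / (2 * I)], ?_⟩, ?_⟩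
      · rw [Matrix.det_fin_two_of]; ring
      · erw [Matrix.SpecialLinearGroup.coe_inv]
        simp only [Matrix.SpecialLinearGroup.coe_mk, Matrix.adjugate_fin_two_of]
        rw [hM, haI, hb0]
        ext i j
        fin_cases i <;> fin_cases j <;>
          simp [Mz, Matrix.mul_apply, Fin.sum_univ_two] <;>
          field_simp <;> ring_nf

theorem stmt_10
    (Q : Set (Matrix (Fin 2) (Fin 2) ℂ))
    (hQ : Q = {M | M.trace = 0 ∧ M.det = 1})
    (f : Matrix (Fin 2) (Fin 2) ℂ → Matrix (Fin 2) (Fin 2) ℂ)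
    (hmaps : ∀ M ∈ Q, f M ∈ Q)
    (hequiv : ∀ (A : Matrix.SpecialLinearGroup (Fin 2) ℂ), ∀ M ∈ Q,
      f ((A : Matrix (Fin 2) (Fin 2) ℂ) * M *
          ((A⁻¹ : Matrix.SpecialLinearGroup (Fin 2) ℂ) : Matrix (Fin 2) (Fin 2) ℂ))
        = (A : Matrix (Fin 2) (Fin 2) ℂ) * f M *
          ((A⁻¹ : Matrix.SpecialLinearGroup (Fin 2) ℂ) : Matrix (Fin 2) (Fin 2) ℂ)) :
    (∀ M ∈ Q, f M = M) ∨ (∀ M ∈ Q, f M = -M) := by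
  have hMz : Mz ∈ Q := by rw [hQ]; exact ⟨Mz_trace, Mz_det⟩
  set D : Matrix.SpecialLinearGroup (Fin 2) ℂ :=
    ⟨!![2, 0; 0, 1/2], by rw [Matrix.det_fin_two_of]; norm_num⟩ with hDdef
  have hDconj : (D : Matrix (Fin 2) (Fin 2) ℂ) * Mz *
      ((D⁻¹ : Matrix.SpecialLinearGroup (Fin 2) ℂ) : Matrix (Fin 2) (Fin 2) ℂ) = Mz := by
    rw [Matrix.SpecialLinearGroup.coe_inv, hDdef]
    simp only [Matrix.SpecialLinearGroup.coe_mk, Matrix.adjugate_fin_two_of]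
    ext i j
    fin_cases i <;> fin_cases j <;>
      simp [Mz, Matrix.mul_apply, Fin.sum_univ_two] <;> ring
  have hcomm : f Mz = (D : Matrix (Fin 2) (Fin 2) ℂ) * f Mz *
      ((D⁻¹ : Matrix.SpecialLinearGroup (Fin 2) ℂ) : Matrix (Fin 2) (Fin 2) ℂ) := by
    have := hequiv D Mz hMz
    rwa [hDconj] at this
  set N := f Mz with hNdef
  have hNQ : N.trace = 0 ∧ N.det = 1 := by
    have := hmaps Mz hMz; rwa [hQ] at this
  rw [Matrix.SpecialLinearGroup.coe_inv, hDdef] at hcomm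
  simp only [Matrix.SpecialLinearGroup.coe_mk, Matrix.adjugate_fin_two_of] at hcomm
  have key : !![(2:ℂ), 0; 0, 1/2] * N * !![1/2, -0; -0, 2]
      = !![N 0 0, 4 * N 0 1; N 1 0 / 4, N 1 1] := by
    ext i j
    fin_cases i <;> fin_cases j <;>
      (simp [Matrix.mul_apply, Matrix.vecMul, dotProduct, Fin.sum_univ_two]; ring)
  rw [key] at hcomm
  have e01 : N 0 1 = 0 := by
    have h := congrFun (congrFun hcomm 0) 1
    simp at h
    linear_combination (-1/3 : ℂ) * h
  have e10 : N 1 0 = 0 := by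
    have h := congrFun (congrFun hcomm 1) 0
    simp at h
    linear_combination (4/3 : ℂ) * h - (4/3 : ℂ) * (mul_div_cancel₀ (N 1 0) (by norm_num : (4:ℂ) ≠ 0))
  have e11 : N 1 1 = -N 0 0 := by
    have h := Matrix.trace_fin_two N
    rw [hNQ.1] at h
    linear_combination -h
  have hdet := Matrix.det_fin_two N
  rw [hNQ.2, e01, e11] at hdet
  have hfact : (N 0 0 - I) * (N 0 0 + I) = 0 := by
    linear_combination hdet - Complex.I_sq
  have main : ∀ s : ℂ, N = s • Mz → ∀ M ∈ Q, f M = s • M := by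
    intro s hNs M hMQ
    rw [hQ] at hMQ
    obtain ⟨A, hA⟩ := conj_to_Mz M hMQ.1 hMQ.2
    have h := hequiv A Mz hMz
    rw [← hA, ← hNdef, hNs] at h
    rw [h, hA]
    rw [Matrix.mul_smul, Matrix.smul_mul]
  rcases mul_eq_zero.mp hfact with h | h
  · left
    intro M hM
    have hN : N = (1 : ℂ) • Mz := by
      have h00 : N 0 0 = I := by linear_combination h
      ext i j
      fin_cases i <;> fin_cases j <;> simp [Mz, h00, e01, e10, e11]
    have := main 1 hN M hM
    simpa using this
  · right
    intro M hM
    have hN : N = (-1 : ℂ) • Mz := by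
      have h00 : N 0 0 = -I := by linear_combination h
      ext i j
      fin_cases i <;> fin_cases j <;> simp [Mz, h00, e01, e10, e11]
    have := main (-1) hN M hM
    simpa using this
end

section
/- Let N be the set of 2×2 complex matrices M with M² = 0, and let f : N → N be any map satisfying f(A M A⁻¹) = A f(M) A⁻¹ for all A ∈ SL(2,ℂ) and all M ∈ N. Then there exists a complex number c such that f(M) = c M for all M ∈ N. -/
/-!
An equivariant map sends each point to a point fixed by that point's stabilizer. The zero
matrix is fixed by all of `SL₂`, so `f 0` commutes with every transvection and is a scalar
matrix, hence zero since it squares to zero. The matrix `E = E₀₁` is fixed by the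
transvection `1 + E`, so `f E` commutes with `E`; being square-zero it is then `c • E`.
Finally every nonzero square-zero matrix is `A E A⁻¹` for some `A ∈ SL₂(ℂ)`: in a basis
`(M v, v)` with `M v ≠ 0` it becomes `E`, and rescaling `v` by a square root of the inverse
determinant puts the change of basis in `SL₂`. Equivariance then gives `f M = c • M`.
-/

open Matrix

namespace Matrix

section Equivariance

variable {n R : Type*} [Fintype n] [DecidableEq n] [CommRing R]

local notation:1024 "↑ₘ" A:1024 => ((A : SpecialLinearGroup n R) : Matrix n n R)

def IsSLConjEquivariantOn (N : Set (Matrix n n R)) (f : Matrix n n R → Matrix n n R) : Prop :=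
  ∀ A : SpecialLinearGroup n R, ∀ M ∈ N, f (↑ₘA * M * ↑ₘA⁻¹) = ↑ₘA * f M * ↑ₘA⁻¹

lemma SpecialLinearGroup.conj_eq_iff_mul_eq_mul (A : SpecialLinearGroup n R)
    (X M : Matrix n n R) : ↑ₘA * X * ↑ₘA⁻¹ = M ↔ ↑ₘA * X = M * ↑ₘA := by
  have h₁ : ↑ₘA * ↑ₘA⁻¹ = 1 := by
    rw [← SpecialLinearGroup.coe_mul, mul_inv_cancel, SpecialLinearGroup.coe_one]
  have h₂ : ↑ₘA⁻¹ * ↑ₘA = 1 := by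
    rw [← SpecialLinearGroup.coe_mul, inv_mul_cancel, SpecialLinearGroup.coe_one]
  constructor
  · rintro rfl
    rw [Matrix.mul_assoc _ _ ↑ₘA, h₂, Matrix.mul_one]
  · intro h
    rw [h, Matrix.mul_assoc, h₁, Matrix.mul_one]

lemma IsSLConjEquivariantOn.commute {N : Set (Matrix n n R)} {f : Matrix n n R → Matrix n n R}
    (hf : IsSLConjEquivariantOn N f) {A : SpecialLinearGroup n R} {M : Matrix n n R}
    (hM : M ∈ N) (hA : Commute ↑ₘA M) : Commute ↑ₘA (f M) := by
  have hfix := hf A M hM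
  rwa [(SpecialLinearGroup.conj_eq_iff_mul_eq_mul A M M).2 hA.eq, eq_comm,
    SpecialLinearGroup.conj_eq_iff_mul_eq_mul] at hfix

lemma eq_zero_of_mem_range_scalar_of_sq_eq_zero [Nonempty n] [NoZeroDivisors R]
    {X : Matrix n n R} (hX : X ∈ Set.range (scalar n)) (hX2 : X ^ 2 = 0) : X = 0 := by
  obtain ⟨r, rfl⟩ := hX
  rw [← map_pow, ← map_zero (scalar n), scalar_inj] at hX2
  rw [pow_eq_zero_iff two_ne_zero |>.1 hX2, map_zero]

lemma IsSLConjEquivariantOn.apply_zero [Nonempty n] [NoZeroDivisors R]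
    {N : Set (Matrix n n R)} {f : Matrix n n R → Matrix n n R}
    (hf : IsSLConjEquivariantOn N f) (h0 : 0 ∈ N) (hf0 : f 0 ^ 2 = 0) : f 0 = 0 :=
  eq_zero_of_mem_range_scalar_of_sq_eq_zero
    (mem_range_scalar_of_commute_transvectionStruct fun t =>
      hf.commute (A := ⟨t.toMatrix, t.det⟩) h0 (Commute.zero_right _))
    hf0

end Equivariance

section FinTwo

variable {R K : Type*}

lemma single_zero_one_fin_two [Zero R] [One R] :
    (single 0 1 1 : Matrix (Fin 2) (Fin 2) R) = !![0, 1; 0, 0] := by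
  ext i j
  fin_cases i <;> fin_cases j <;> rfl

lemma single_zero_one_sq_fin_two [Semiring R] :
    (single 0 1 1 : Matrix (Fin 2) (Fin 2) R) ^ 2 = 0 :=
  (sq _).trans (single_mul_single_of_ne 1 0 1 0 (by decide) 1)

lemma eq_smul_single_of_commute_of_sq_eq_zero [CommRing R] [NoZeroDivisors R]
    {X : Matrix (Fin 2) (Fin 2) R} (hc : Commute (single 0 1 1) X) (hX : X ^ 2 = 0) :
    X = X 0 1 • single 0 1 1 := by
  have hc := hc.eq
  rw [single_zero_one_fin_two, X.eta_fin_two] at hc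
  obtain ⟨⟨h10, h11⟩, -⟩ : (X 1 0 = 0 ∧ X 1 1 = X 0 0) ∧ _ := by simpa [mul_fin_two] using hc
  have h00 : X 0 0 = 0 := by
    simpa [sq, mul_apply, h10] using congrFun₂ hX 0 0
  ext i j
  fin_cases i <;> fin_cases j <;> simp [single_zero_one_fin_two, h00, h10, h11]

lemma IsSLConjEquivariantOn.apply_single_zero_one [CommRing R] [NoZeroDivisors R]
    {N : Set (Matrix (Fin 2) (Fin 2) R)} {f : Matrix (Fin 2) (Fin 2) R → Matrix (Fin 2) (Fin 2) R}
    (hf : IsSLConjEquivariantOn N f) (hE : single 0 1 1 ∈ N) (hfE : f (single 0 1 1) ^ 2 = 0) :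
    ∃ c : R, f (single 0 1 1) = c • single 0 1 1 := by
  have hT : Commute (1 + single 0 1 1) (f (single 0 1 1)) :=
    hf.commute (A := SpecialLinearGroup.transvection (by decide : (0 : Fin 2) ≠ 1) 1) hE
      ((Commute.one_left _).add_left (Commute.refl _))
  have hc : Commute (single 0 1 1) (f (single 0 1 1)) := by
    simpa only [add_sub_cancel_left] using hT.sub_left (Commute.one_left _)
  exact ⟨_, eq_smul_single_of_commute_of_sq_eq_zero hc hfE⟩

lemma exists_det_ne_zero_mul_eq_mul_single_of_sq_eq_zero [Field K]
    {M : Matrix (Fin 2) (Fin 2) K} (hM : M ^ 2 = 0) (hM0 : M ≠ 0) :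
    ∃ P : Matrix (Fin 2) (Fin 2) K, P.det ≠ 0 ∧ M * P = P * single 0 1 1 := by
  obtain ⟨v, hv⟩ : ∃ v, M *ᵥ v ≠ 0 := by
    by_contra! h
    exact hM0 (ext_iff_mulVec.2 fun v => by simp [h v])
  have hMw : M *ᵥ (M *ᵥ v) = 0 := by rw [mulVec_mulVec, ← sq, hM, zero_mulVec]
  refine ⟨(of ![M *ᵥ v, v])ᵀ, ?_, ?_⟩
  · -- a Jordan chain `v ↦ M v ↦ 0` is linearly independent
    rw [det_transpose]
    intro h
    obtain ⟨x, hx, hxv⟩ := exists_vecMul_eq_zero_iff.2 h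
    have hcomb : x 0 • M *ᵥ v + x 1 • v = 0 := by
      simpa [vecHead, vecTail] using hxv
    have h1 : x 1 = 0 := by
      have := congrArg (M *ᵥ ·) hcomb
      simp only [mulVec_add, mulVec_smul, hMw, smul_zero, zero_add, mulVec_zero] at this
      exact (smul_eq_zero.1 this).resolve_right hv
    have h0 : x 0 = 0 := by
      rw [h1, zero_smul, add_zero] at hcomb
      exact (smul_eq_zero.1 hcomb).resolve_right hv
    exact hx (funext fun i => by fin_cases i <;> assumption)
  · ext i j
    fin_cases j
    · simpa [mul_apply, Fin.sum_univ_two, single_zero_one_fin_two, mulVec, dotProduct]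
        using congrFun hMw i
    · fin_cases i <;> simp [mul_apply, Fin.sum_univ_two, single_zero_one_fin_two]

lemma SpecialLinearGroup.exists_conj_single_eq_of_sq_eq_zero [Field K] [IsAlgClosed K]
    {M : Matrix (Fin 2) (Fin 2) K} (hM : M ^ 2 = 0) (hM0 : M ≠ 0) :
    ∃ A : SpecialLinearGroup (Fin 2) K,
      (A : Matrix (Fin 2) (Fin 2) K) * single 0 1 1 *
        ((A⁻¹ : SpecialLinearGroup (Fin 2) K) : Matrix (Fin 2) (Fin 2) K) = M := by
  obtain ⟨P, hP, hMP⟩ := exists_det_ne_zero_mul_eq_mul_single_of_sq_eq_zero hM hM0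
  obtain ⟨s, hs⟩ := IsAlgClosed.exists_pow_nat_eq P.det⁻¹ two_pos
  let A : SpecialLinearGroup (Fin 2) K :=
    ⟨s • P, by rw [det_smul, Fintype.card_fin, hs, inv_mul_cancel₀ hP]⟩
  refine ⟨A, (conj_eq_iff_mul_eq_mul A _ _).2 ?_⟩
  change s • P * _ = M * (s • P)
  rw [Matrix.smul_mul, Matrix.mul_smul, hMP]

end FinTwo

end Matrix

theorem stmt_12
    (N : Set (Matrix (Fin 2) (Fin 2) ℂ))
    (hN : N = {M | M ^ 2 = 0})
    (f : Matrix (Fin 2) (Fin 2) ℂ → Matrix (Fin 2) (Fin 2) ℂ)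
    (hmaps : ∀ M ∈ N, f M ∈ N)
    (hequiv : ∀ (A : Matrix.SpecialLinearGroup (Fin 2) ℂ), ∀ M ∈ N,
      f ((A : Matrix (Fin 2) (Fin 2) ℂ) * M *
          ((A⁻¹ : Matrix.SpecialLinearGroup (Fin 2) ℂ) : Matrix (Fin 2) (Fin 2) ℂ))
        = (A : Matrix (Fin 2) (Fin 2) ℂ) * f M *
          ((A⁻¹ : Matrix.SpecialLinearGroup (Fin 2) ℂ) : Matrix (Fin 2) (Fin 2) ℂ)) :
    ∃ c : ℂ, ∀ M ∈ N, f M = c • M := by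
  subst hN
  have hE : (single 0 1 1 : Matrix (Fin 2) (Fin 2) ℂ) ∈ {M | M ^ 2 = 0} :=
    single_zero_one_sq_fin_two
  have h0 : (0 : Matrix (Fin 2) (Fin 2) ℂ) ∈ {M | M ^ 2 = 0} := by simp
  obtain ⟨c, hc⟩ := IsSLConjEquivariantOn.apply_single_zero_one hequiv hE (hmaps _ hE)
  refine ⟨c, fun M hM => ?_⟩
  rcases eq_or_ne M 0 with rfl | hM0
  · rw [smul_zero]
    exact IsSLConjEquivariantOn.apply_zero hequiv h0 (hmaps 0 h0)
  · obtain ⟨A, rfl⟩ := SpecialLinearGroup.exists_conj_single_eq_of_sq_eq_zero hM hM0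
    rw [hequiv A _ hE, hc, Matrix.mul_smul, Matrix.smul_mul]
end
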